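/- 𝒫^sc is a nonempty compact subset of [0,1]^𝒜 endowed with the product topology of pointwise convergence, and for every F ∈ 𝒜 the envelopes are attained and satisfy min{μ(F) : μ ∈ 𝒫^sc} = ∫_* σ(F|H_i) π(dH_i) and max{μ(F) : μ ∈ 𝒫^sc} = ∫^* σ(F|H_i) π(dH_i). -/

import Mathlib

open Set

open scoped Classical

variable {Ω : Type*}

/-- A field of sets on `Ω`: contains `univ`, closed under complements and finite unions. -/
def IsSetField (𝒜 : Set (Set Ω)) : Prop :=
  Set.univ ∈ 𝒜 ∧ (∀ A ∈ 𝒜, Aᶜ ∈ 𝒜) ∧ ∀ A ∈ 𝒜, ∀ B ∈ 𝒜, A ∪ B ∈ 𝒜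

/-- A finitely additive probability on the field `𝒜`. -/
def IsFAP (𝒜 : Set (Set Ω)) (P : Set Ω → ℝ) : Prop :=
  (∀ A ∈ 𝒜, 0 ≤ P A ∧ P A ≤ 1) ∧ P Set.univ = 1 ∧
    ∀ A ∈ 𝒜, ∀ B ∈ 𝒜, Disjoint A B → P (A ∪ B) = P A + P B

/-- A partition of `Ω` into nonempty pairwise disjoint pieces. -/
def IsPartition {ι : Type*} (H : ι → Set Ω) : Prop :=
  (∀ i, (H i).Nonempty) ∧ (Pairwise fun i j => Disjoint (H i) (H j)) ∧
    (⋃ i, H i) = Set.univ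

/-- A field containing every member of the partition `H` and whose members are
unions of members of the partition. -/
def IsFieldOver {ι : Type*} (H : ι → Set Ω) (𝒜L : Set (Set Ω)) : Prop :=
  IsSetField 𝒜L ∧ (∀ i, H i ∈ 𝒜L) ∧ ∀ A ∈ 𝒜L, ∃ S : Set ι, A = ⋃ i ∈ S, H i

/-- A field containing `𝒜L ∪ 𝒜E` whose members are unions of the atoms `H i ∩ E j`. -/
def IsJointField {ι κ : Type*} (H : ι → Set Ω) (E : κ → Set Ω)
    (𝒜L 𝒜E 𝒜 : Set (Set Ω)) : Prop :=
  IsSetField 𝒜 ∧ 𝒜L ⊆ 𝒜 ∧ 𝒜E ⊆ 𝒜 ∧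
    ∀ A ∈ 𝒜, ∃ S : Set (ι × κ), A = ⋃ p ∈ S, H p.1 ∩ E p.2

/-- A strategy on `𝒜 × ℒ`: each `σ (·|H i)` is a finitely additive probability on `𝒜`
equal to `1` on events implied by `H i`. -/
def IsStrategy {ι : Type*} (𝒜 : Set (Set Ω)) (H : ι → Set Ω) (σ : Set Ω → ι → ℝ) : Prop :=
  ∀ i, IsFAP 𝒜 (fun F => σ F i) ∧ ∀ F ∈ 𝒜, H i ⊆ F → σ F i = 1

/-- A full conditional probability on the field `𝒜` (conditions (C1), (C2), (C3)). -/
def IsFCP (𝒜 : Set (Set Ω)) (P : Set Ω → Set Ω → ℝ) : Prop :=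
  (∀ E ∈ 𝒜, ∀ K ∈ 𝒜, K.Nonempty → P E K = P (E ∩ K) K) ∧
  (∀ K ∈ 𝒜, K.Nonempty → IsFAP 𝒜 fun E => P E K) ∧
  ∀ E ∈ 𝒜, ∀ F ∈ 𝒜, ∀ K ∈ 𝒜, K.Nonempty → (E ∩ K).Nonempty →
    P (E ∩ F) K = P E K * P F (E ∩ K)

/-- `P` extends the prior `π` on `𝒜L` and the strategy `σ` on `𝒜 × ℒ`. -/
def ExtendsPriorStrategy {ι : Type*} (𝒜 𝒜L : Set (Set Ω)) (H : ι → Set Ω)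
    (π : Set Ω → ℝ) (σ : Set Ω → ι → ℝ) (P : Set Ω → Set Ω → ℝ) : Prop :=
  (∀ B ∈ 𝒜L, P B Set.univ = π B) ∧ ∀ F ∈ 𝒜, ∀ i, P F (H i) = σ F i

/-- The set `𝒫` of full conditional probabilities on `𝒜` extending `{π, σ}`. -/
def FCPSet {ι : Type*} (𝒜 𝒜L : Set (Set Ω)) (H : ι → Set Ω)
    (π : Set Ω → ℝ) (σ : Set Ω → ι → ℝ) : Set (Set Ω → Set Ω → ℝ) :=
  {P | IsFCP 𝒜 P ∧ ExtendsPriorStrategy 𝒜 𝒜L H π σ P}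

/-- Lower envelope of a set of conditional probabilities at `F|K`. -/
noncomputable def lowEnv (Ps : Set (Set Ω → Set Ω → ℝ)) (F K : Set Ω) : ℝ :=
  sInf ((fun P => P F K) '' Ps)

/-- Upper envelope of a set of conditional probabilities at `F|K`. -/
noncomputable def upEnv (Ps : Set (Set Ω → Set Ω → ℝ)) (F K : Set Ω) : ℝ :=
  sSup ((fun P => P F K) '' Ps)

/-- A finite partition of `Ω` contained in `𝒜L`. -/
def IsFinPart (𝒜L : Set (Set Ω)) (T : Finset (Set Ω)) : Prop :=
  (↑T : Set (Set Ω)) ⊆ 𝒜L ∧ (∀ A ∈ T, (A : Set Ω).Nonempty) ∧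
    (∀ A ∈ T, ∀ B ∈ T, A ≠ B → Disjoint A B) ∧ ⋃₀ (↑T : Set (Set Ω)) = Set.univ

/-- Lower Stieltjes integral of `X : ℒ → ℝ` with respect to `μ` on `𝒜L`. -/
noncomputable def lowerSInt {ι : Type*} (H : ι → Set Ω) (𝒜L : Set (Set Ω))
    (X : ι → ℝ) (μ : Set Ω → ℝ) : ℝ :=
  sSup {x | ∃ T : Finset (Set Ω), IsFinPart 𝒜L T ∧
    x = ∑ A ∈ T, sInf {y | ∃ i, H i ⊆ A ∧ y = X i} * μ A}

/-- Upper Stieltjes integral of `X : ℒ → ℝ` with respect to `μ` on `𝒜L`. -/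
noncomputable def upperSInt {ι : Type*} (H : ι → Set Ω) (𝒜L : Set (Set Ω))
    (X : ι → ℝ) (μ : Set Ω → ℝ) : ℝ :=
  sInf {x | ∃ T : Finset (Set Ω), IsFinPart 𝒜L T ∧
    x = ∑ A ∈ T, sSup {y | ∃ i, H i ⊆ A ∧ y = X i} * μ A}

/-- `𝒜L`-continuity of a bounded function `X : ℒ → ℝ`. -/
def ALContinuous {ι : Type*} (H : ι → Set Ω) (𝒜L : Set (Set Ω)) (X : ι → ℝ) : Prop :=
  (∃ M : ℝ, ∀ i, |X i| ≤ M) ∧ ∀ t : ℝ, ∀ ε > (0 : ℝ), ∃ A ∈ 𝒜L,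
    (⋃ i ∈ {i | t + ε ≤ X i}, H i) ⊆ A ∧ A ⊆ ⋃ i ∈ {i | t ≤ X i}, H i

/-- Countable additivity of `P` on the field `𝒜`. -/
def CountablyAdditiveOn (𝒜 : Set (Set Ω)) (P : Set Ω → ℝ) : Prop :=
  ∀ A : ℕ → Set Ω, (∀ n, A n ∈ 𝒜) → (Pairwise fun m n => Disjoint (A m) (A n)) →
    (⋃ n, A n) ∈ 𝒜 → HasSum (fun n => P (A n)) (P (⋃ n, A n))

/-- A (normalized) capacity on the field `𝒜`. -/
def IsCapacity (𝒜 : Set (Set Ω)) (φ : Set Ω → ℝ) : Prop :=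
  φ ∅ = 0 ∧ φ Set.univ = 1 ∧ (∀ A ∈ 𝒜, 0 ≤ φ A ∧ φ A ≤ 1) ∧
    ∀ A ∈ 𝒜, ∀ B ∈ 𝒜, A ⊆ B → φ A ≤ φ B

/-- Total monotonicity of a capacity `φ` on the field `𝒜`. -/
def TotallyMonotone (𝒜 : Set (Set Ω)) (φ : Set Ω → ℝ) : Prop :=
  ∀ n : ℕ, 2 ≤ n → ∀ A : Fin n → Set Ω, (∀ i, A i ∈ 𝒜) →
    ∑ s ∈ Finset.univ.powerset.filter (fun s : Finset (Fin n) => s.Nonempty),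
      (-1 : ℝ) ^ (s.card - 1) * φ (⋂ i ∈ s, A i) ≤ φ (⋃ i, A i)

/-- Restriction of a conditional probability to the domain `𝒜 × ℬ⁰`, viewed as a point
of the product space `ℝ^(𝒜 × ℬ⁰)`. -/
def restrictPairs (𝒜 ℬ : Set (Set Ω)) (Q : Set Ω → Set Ω → ℝ)
    (p : {p : Set Ω × Set Ω // p.1 ∈ 𝒜 ∧ p.2 ∈ ℬ ∧ p.2.Nonempty}) : ℝ :=
  Q p.val.1 p.val.2

/-- Restriction of a set function to the domain `𝒜`, viewed as a point of `ℝ^𝒜`. -/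
def restrictDom (𝒜 : Set (Set Ω)) (μ : Set Ω → ℝ) (A : {A : Set Ω // A ∈ 𝒜}) : ℝ :=
  μ A.val

/-- The field of all unions of members of the partition `H`, i.e. `⟨ℒ⟩*`. -/
def unionsOf {ι : Type*} (H : ι → Set Ω) : Set (Set Ω) :=
  {A | ∃ S : Set ι, A = ⋃ i ∈ S, H i}

/-- The set `𝒬^fd` of fully ℒ-disintegrable full conditional probabilities on `𝒜`
extending `{π, σ}`. -/
def QfdSet {ι : Type*} (𝒜 𝒜L : Set (Set Ω)) (H : ι → Set Ω)
    (π : Set Ω → ℝ) (σ : Set Ω → ι → ℝ) : Set (Set Ω → Set Ω → ℝ) :=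
  {Q | IsFCP 𝒜 Q ∧ ExtendsPriorStrategy 𝒜 𝒜L H π σ Q ∧
    ∀ F ∈ 𝒜, ∀ K ∈ 𝒜L, K.Nonempty →
      Q F K = lowerSInt H 𝒜L (fun i => σ F i) fun B => Q B K}

/-- The set `𝒬^fsc` of fully strongly ℒ-conglomerable full conditional probabilities
on `𝒜` extending `{π, σ}`. -/
def QfscSet {ι : Type*} (𝒜 𝒜L : Set (Set Ω)) (H : ι → Set Ω)
    (π : Set Ω → ℝ) (σ : Set Ω → ι → ℝ) : Set (Set Ω → Set Ω → ℝ) :=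
  {Q | IsFCP 𝒜 Q ∧ ExtendsPriorStrategy 𝒜 𝒜L H π σ Q ∧
    ∀ F ∈ 𝒜, ∀ K ∈ 𝒜L, K.Nonempty → ∀ B ∈ 𝒜L, B.Nonempty → B ⊆ K →
      Q B K * sInf {x | ∃ i, H i ⊆ B ∧ x = σ F i} ≤ Q (F ∩ B) K ∧
      Q (F ∩ B) K ≤ Q B K * sSup {x | ∃ i, H i ⊆ B ∧ x = σ F i}}

/-- The set `𝒫^sc` of strongly ℒ-conglomerable joint probabilities consistent with `{π, σ}`. -/
def PscSet {ι : Type*} (𝒜 𝒜L : Set (Set Ω)) (H : ι → Set Ω)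
    (π : Set Ω → ℝ) (σ : Set Ω → ι → ℝ) : Set (Set Ω → ℝ) :=
  {μ | (∃ P ∈ FCPSet 𝒜 𝒜L H π σ, μ = fun F => P F Set.univ) ∧
    ∀ F ∈ 𝒜, ∀ B ∈ 𝒜L, B.Nonempty →
      π B * sInf {x | ∃ i, H i ⊆ B ∧ x = σ F i} ≤ μ (F ∩ B) ∧
      μ (F ∩ B) ≤ π B * sSup {x | ∃ i, H i ⊆ B ∧ x = σ F i}}

/-- The set `𝒫^fd` of fully ℒ-disintegrable conditional probabilities on `𝒜 × 𝒜L⁰`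
extending `{π, σ}`. -/
def PfdSet {ι : Type*} (𝒜 𝒜L : Set (Set Ω)) (H : ι → Set Ω)
    (π : Set Ω → ℝ) (σ : Set Ω → ι → ℝ) : Set (Set Ω → Set Ω → ℝ) :=
  {P | (∀ E ∈ 𝒜, ∀ K ∈ 𝒜L, K.Nonempty → P E K = P (E ∩ K) K) ∧
    (∀ K ∈ 𝒜L, K.Nonempty → IsFAP 𝒜 fun E => P E K) ∧
    (∀ E ∈ 𝒜, ∀ F ∈ 𝒜, ∀ K ∈ 𝒜L, K.Nonempty → E ∩ K ∈ 𝒜L → (E ∩ K).Nonempty →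
      P (E ∩ F) K = P E K * P F (E ∩ K)) ∧
    (∀ B ∈ 𝒜L, P B Set.univ = π B) ∧ (∀ F ∈ 𝒜, ∀ i, P F (H i) = σ F i) ∧
    ∀ F ∈ 𝒜, ∀ K ∈ 𝒜L, K.Nonempty →
      P F K = lowerSInt H 𝒜L (fun i => σ F i) fun B => P B K}

/-- The Choquet integral `C∫ X dφ = ∫₀¹ φ₊((X ≥ t)) dt` of a `[0,1]`-valued `X : ℒ → ℝ`
with respect to a capacity `φ` on `𝒜L`, where `φ₊` is the inner extension of `φ`. -/
noncomputable def choquetInt {ι : Type*} (H : ι → Set Ω) (𝒜L : Set (Set Ω))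
    (X : ι → ℝ) (φ : Set Ω → ℝ) : ℝ :=
  ∫ t in (0 : ℝ)..(1 : ℝ),
    sSup {y | ∃ B ∈ 𝒜L, B ⊆ (⋃ i ∈ {i | t ≤ X i}, H i) ∧ y = φ B}

/-!
Every `μ ∈ 𝒫^sc` lies between the two Stieltjes integrals of `σ(F|·)`: summing the strong
conglomerability bounds over the cells of a finite `𝒜_ℒ`-partition compares `μ(F)` with the
lower and upper Stieltjes sums.

Conversely, the upper integral is sublinear on bounded functions on `ℒ` and
`∫_* X dπ = -∫^* (-X) dπ`, so by Hahn–Banach every value `l` between the two integrals of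
`σ(F|·)` is attained at `σ(F|·)` by a linear functional squeezed between them. Composed with
`F ↦ σ(F|·)`, it gives an additive `ν` on `𝒜` which, by the same sandwich on the partitions
`{B, Bᶜ}`, extends `π`, is strongly conglomerable, and satisfies
`ν(F ∩ H_i) = σ(F|H_i) ν(H_i)`. Such a `ν` is the unconditional part of a full conditional
probability with conditionals `σ(·|H_i)`: on a finite family this is lexicographic
conditioning along `ν`, the `σ(·|H_i)` and point masses, and compactness of
`[0,1]^(2^Ω × 2^Ω)` passes to all of `𝒜`.

`𝒫^sc` is compact as the image of the full conditional probabilities in `𝒫` with strongly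
conglomerable unconditional part, clamped into `[0,1]^(2^Ω × 2^Ω)`: each condition defining
them involves finitely many coordinates, hence is closed.
-/
section SetField

variable {𝒜 : Set (Set Ω)} {A B : Set Ω}

theorem IsSetField.compl_mem (h : IsSetField 𝒜) (hA : A ∈ 𝒜) : Aᶜ ∈ 𝒜 := h.2.1 A hA

theorem IsSetField.union_mem (h : IsSetField 𝒜) (hA : A ∈ 𝒜) (hB : B ∈ 𝒜) : A ∪ B ∈ 𝒜 :=
  h.2.2 A hA B hB

theorem IsSetField.empty_mem (h : IsSetField 𝒜) : ∅ ∈ 𝒜 := by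
  simpa using h.compl_mem h.1

theorem IsSetField.inter_mem (h : IsSetField 𝒜) (hA : A ∈ 𝒜) (hB : B ∈ 𝒜) : A ∩ B ∈ 𝒜 := by
  simpa [compl_union] using h.compl_mem (h.union_mem (h.compl_mem hA) (h.compl_mem hB))

theorem IsSetField.biUnion_mem {β : Type*} (h : IsSetField 𝒜) (T : Finset β) {f : β → Set Ω}
    (hf : ∀ b ∈ T, f b ∈ 𝒜) : (⋃ b ∈ T, f b) ∈ 𝒜 := by
  induction T using Finset.induction_on with
  | empty => simpa using h.empty_mem
  | insert a s _ ih =>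
    rw [Finset.set_biUnion_insert]
    exact h.union_mem (hf a (by simp)) (ih fun b hb => hf b (by simp [hb]))

end SetField

section FAP

variable {𝒜 : Set (Set Ω)} {P : Set Ω → ℝ} {A B : Set Ω}

theorem IsFAP.nonneg (hP : IsFAP 𝒜 P) (hA : A ∈ 𝒜) : 0 ≤ P A := (hP.1 A hA).1

theorem IsFAP.le_one (hP : IsFAP 𝒜 P) (hA : A ∈ 𝒜) : P A ≤ 1 := (hP.1 A hA).2

theorem IsFAP.union (hP : IsFAP 𝒜 P) (hA : A ∈ 𝒜) (hB : B ∈ 𝒜) (hAB : Disjoint A B) :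
    P (A ∪ B) = P A + P B :=
  hP.2.2 A hA B hB hAB

theorem IsFAP.empty (h𝒜 : IsSetField 𝒜) (hP : IsFAP 𝒜 P) : P ∅ = 0 := by
  simpa using hP.union h𝒜.empty_mem h𝒜.empty_mem (disjoint_empty ∅)

theorem IsFAP.compl (h𝒜 : IsSetField 𝒜) (hP : IsFAP 𝒜 P) (hA : A ∈ 𝒜) : P Aᶜ = 1 - P A := by
  have h := hP.union hA (h𝒜.compl_mem hA) disjoint_compl_right
  rw [union_compl_self, hP.2.1] at h
  linarith

theorem IsFAP.inter_add_inter_compl (h𝒜 : IsSetField 𝒜) (hP : IsFAP 𝒜 P) (hA : A ∈ 𝒜)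
    (hB : B ∈ 𝒜) : P (A ∩ B) + P (A ∩ Bᶜ) = P A := by
  rw [← hP.union (h𝒜.inter_mem hA hB) (h𝒜.inter_mem hA (h𝒜.compl_mem hB))
    (disjoint_compl_right.inter_left' A |>.inter_right' A), ← inter_union_distrib_left,
    union_compl_self, inter_univ]

theorem IsFAP.mono (h𝒜 : IsSetField 𝒜) (hP : IsFAP 𝒜 P) (hA : A ∈ 𝒜) (hB : B ∈ 𝒜)
    (hAB : A ⊆ B) : P A ≤ P B := by
  have h := hP.inter_add_inter_compl h𝒜 hB hA
  rw [inter_eq_self_of_subset_right hAB] at h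
  linarith [hP.nonneg (h𝒜.inter_mem hB (h𝒜.compl_mem hA))]

theorem IsFAP.inter_eq_zero (h𝒜 : IsSetField 𝒜) (hP : IsFAP 𝒜 P) (hA : A ∈ 𝒜) (hB : B ∈ 𝒜)
    (hB0 : P B = 0) : P (A ∩ B) = 0 :=
  le_antisymm (hB0 ▸ hP.mono h𝒜 (h𝒜.inter_mem hA hB) hB inter_subset_right)
    (hP.nonneg (h𝒜.inter_mem hA hB))

theorem IsFAP.inter_eq_self (h𝒜 : IsSetField 𝒜) (hP : IsFAP 𝒜 P) (hA : A ∈ 𝒜) (hB : B ∈ 𝒜)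
    (hB1 : P B = 1) : P (A ∩ B) = P A := by
  have h := hP.inter_eq_zero h𝒜 hA (h𝒜.compl_mem hB) (by rw [hP.compl h𝒜 hB, hB1, sub_self])
  linarith [hP.inter_add_inter_compl h𝒜 hA hB]

theorem IsFAP.biUnion {β : Type*} (h𝒜 : IsSetField 𝒜) (hP : IsFAP 𝒜 P) (T : Finset β)
    {f : β → Set Ω} (hf : ∀ b ∈ T, f b ∈ 𝒜) (hd : (T : Set β).PairwiseDisjoint f) :
    P (⋃ b ∈ T, f b) = ∑ b ∈ T, P (f b) := by
  induction T using Finset.induction_on with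
  | empty => simpa using hP.empty h𝒜
  | insert a s ha ih =>
    have hs : ∀ b ∈ s, f b ∈ 𝒜 := fun b hb => hf b (by simp [hb])
    rw [Finset.set_biUnion_insert, Finset.sum_insert ha, hP.union (hf a (by simp))
      (h𝒜.biUnion_mem s hs), ih hs (hd.subset (by simp))]
    refine Set.disjoint_iUnion₂_right.2 fun b hb => hd (by simp) (by simp [hb]) ?_
    rintro rfl
    exact ha hb

theorem IsFAP.eq_sum_inter (h𝒜 : IsSetField 𝒜) (hP : IsFAP 𝒜 P) {𝒜' : Set (Set Ω)}
    (h𝒜' : 𝒜' ⊆ 𝒜) {T : Finset (Set Ω)} (hT : IsFinPart 𝒜' T) (hA : A ∈ 𝒜) :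
    P A = ∑ B ∈ T, P (A ∩ B) := by
  have hcover : (⋃ B ∈ T, A ∩ B) = A := by
    rw [← inter_iUnion₂, ← Finset.set_biUnion_coe, ← sUnion_eq_biUnion, hT.2.2.2, inter_univ]
  conv_lhs => rw [← hcover]
  exact hP.biUnion h𝒜 T (fun B hB => h𝒜.inter_mem hA (h𝒜' (hT.1 hB)))
    fun B hB B' hB' hne => (hT.2.2.1 B hB B' hB' hne).inter_left' A |>.inter_right' A

end FAP

section Partition

variable {ι : Type*} {H : ι → Set Ω} {𝒜L 𝒜 : Set (Set Ω)} {σ : Set Ω → ι → ℝ}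
  {A B F : Set Ω} {i j : ι}

theorem IsPartition.injective (hH : IsPartition H) : Function.Injective H := by
  intro i j hij
  by_contra hne
  obtain ⟨x, hx⟩ := hH.1 i
  exact (hH.2.1 hne).ne_of_mem hx (hij ▸ hx) rfl

theorem IsPartition.subset_compl_of_ne (hH : IsPartition H) (h : i ≠ j) : H i ⊆ (H j)ᶜ :=
  (hH.2.1 h).subset_compl_right

theorem IsFieldOver.exists_subset (h𝒜L : IsFieldOver H 𝒜L) (hA : A ∈ 𝒜L) (hne : A.Nonempty) :
    ∃ i, H i ⊆ A := by
  obtain ⟨S, rfl⟩ := h𝒜L.2.2 A hA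
  obtain ⟨x, hx⟩ := hne
  simp only [mem_iUnion] at hx
  obtain ⟨i, hi, -⟩ := hx
  exact ⟨i, subset_biUnion_of_mem hi⟩

theorem IsStrategy.abs_le_one (hσ : IsStrategy 𝒜 H σ) (hF : F ∈ 𝒜) (i : ι) : |σ F i| ≤ 1 :=
  abs_le.2 ⟨by linarith [(hσ i).1.nonneg hF], (hσ i).1.le_one hF⟩

theorem IsStrategy.apply_eq_zero (h𝒜 : IsSetField 𝒜) (hσ : IsStrategy 𝒜 H σ) (hB : B ∈ 𝒜)
    (hi : H i ⊆ Bᶜ) : σ B i = 0 := by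
  have h := (hσ i).1.compl h𝒜 hB
  rw [(hσ i).2 _ (h𝒜.compl_mem hB) hi] at h
  linarith

theorem IsStrategy.apply_inter_of_subset (h𝒜 : IsSetField 𝒜) (hσ : IsStrategy 𝒜 H σ)
    (hF : F ∈ 𝒜) (hB : B ∈ 𝒜) (hi : H i ⊆ B) : σ (F ∩ B) i = σ F i :=
  (hσ i).1.inter_eq_self h𝒜 hF hB ((hσ i).2 B hB hi)

theorem IsStrategy.apply_inter_of_subset_compl (h𝒜 : IsSetField 𝒜) (hσ : IsStrategy 𝒜 H σ)
    (hF : F ∈ 𝒜) (hB : B ∈ 𝒜) (hi : H i ⊆ Bᶜ) : σ (F ∩ B) i = 0 :=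
  (hσ i).1.inter_eq_zero h𝒜 hF hB (hσ.apply_eq_zero h𝒜 hB hi)

theorem IsStrategy.apply_inter_cell (h𝒜 : IsSetField 𝒜) (hσ : IsStrategy 𝒜 H σ)
    (hH : IsPartition H) (hF : F ∈ 𝒜) (hHi : H i ∈ 𝒜) (j : ι) :
    σ (F ∩ H i) j = σ F i * σ (H i) j := by
  obtain rfl | hji := eq_or_ne j i
  · rw [(hσ j).2 _ hHi subset_rfl, mul_one, hσ.apply_inter_of_subset h𝒜 hF hHi subset_rfl]
  · have hj := hH.subset_compl_of_ne hji
    rw [hσ.apply_eq_zero h𝒜 hHi hj, mul_zero, hσ.apply_inter_of_subset_compl h𝒜 hF hHi hj]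

end Partition

section Stieltjes

variable {ι : Type*} {H : ι → Set Ω} {X Y : ι → ℝ} {M M' c : ℝ} {A B : Set Ω}

-- `sInf`/`sSup` give junk unless `A` contains a cell and `X` is bounded: hence the hypotheses
-- `hA` and `hX` below.
noncomputable def cellInf (H : ι → Set Ω) (X : ι → ℝ) (A : Set Ω) : ℝ :=
  sInf {y | ∃ i, H i ⊆ A ∧ y = X i}

noncomputable def cellSup (H : ι → Set Ω) (X : ι → ℝ) (A : Set Ω) : ℝ :=
  sSup {y | ∃ i, H i ⊆ A ∧ y = X i}

noncomputable def lowerSum (H : ι → Set Ω) (X : ι → ℝ) (μ : Set Ω → ℝ) (T : Finset (Set Ω)) :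
    ℝ :=
  ∑ A ∈ T, cellInf H X A * μ A

noncomputable def upperSum (H : ι → Set Ω) (X : ι → ℝ) (μ : Set Ω → ℝ) (T : Finset (Set Ω)) :
    ℝ :=
  ∑ A ∈ T, cellSup H X A * μ A

theorem cellInf_le (hX : ∀ i, |X i| ≤ M) {i : ι} (hi : H i ⊆ A) : cellInf H X A ≤ X i :=
  csInf_le ⟨-M, by rintro _ ⟨j, -, rfl⟩; linarith [neg_abs_le (X j), hX j]⟩ ⟨i, hi, rfl⟩

theorem le_cellSup (hX : ∀ i, |X i| ≤ M) {i : ι} (hi : H i ⊆ A) : X i ≤ cellSup H X A :=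
  le_csSup ⟨M, by rintro _ ⟨j, -, rfl⟩; exact (le_abs_self _).trans (hX j)⟩ ⟨i, hi, rfl⟩

theorem cellSup_le (hA : ∃ i, H i ⊆ A) (h : ∀ i, H i ⊆ A → X i ≤ c) : cellSup H X A ≤ c := by
  obtain ⟨i, hi⟩ := hA
  exact csSup_le ⟨X i, i, hi, rfl⟩ (by rintro _ ⟨j, hj, rfl⟩; exact h j hj)

theorem cellInf_le_cellSup (hX : ∀ i, |X i| ≤ M) (hA : ∃ i, H i ⊆ A) :
    cellInf H X A ≤ cellSup H X A :=
  let ⟨_, hi⟩ := hA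
  (cellInf_le hX hi).trans (le_cellSup hX hi)

theorem cellSup_mono (hX : ∀ i, |X i| ≤ M) (hA : ∃ i, H i ⊆ A) (hAB : A ⊆ B) :
    cellSup H X A ≤ cellSup H X B :=
  cellSup_le hA fun _ hi => le_cellSup hX (hi.trans hAB)

theorem cellSup_neg : cellSup H (-X) A = -cellInf H X A := by
  rw [cellInf, Real.sInf_def, neg_neg, cellSup]
  congr 1
  ext y
  simp only [Set.mem_ofPred_eq, Set.mem_neg, Pi.neg_apply, neg_eq_iff_eq_neg]

theorem le_cellInf (hA : ∃ i, H i ⊆ A) (h : ∀ i, H i ⊆ A → c ≤ X i) : c ≤ cellInf H X A := by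
  rw [← neg_neg (cellInf H X A), ← cellSup_neg, le_neg]
  exact cellSup_le hA fun i hi => neg_le_neg (h i hi)

theorem cellSup_congr (h : ∀ i, H i ⊆ A → X i = Y i) : cellSup H X A = cellSup H Y A := by
  rw [cellSup, cellSup]
  congr 1
  ext y
  exact ⟨fun ⟨i, hi, hy⟩ => ⟨i, hi, hy.trans (h i hi)⟩,
    fun ⟨i, hi, hy⟩ => ⟨i, hi, hy.trans (h i hi).symm⟩⟩

theorem cellInf_congr (h : ∀ i, H i ⊆ A → X i = Y i) : cellInf H X A = cellInf H Y A := by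
  rw [← neg_neg (cellInf H X A), ← cellSup_neg, cellSup_congr (Y := -Y), cellSup_neg, neg_neg]
  intro i hi
  simp [h i hi]

theorem cellSup_const (hA : ∃ i, H i ⊆ A) : cellSup H (fun _ => c) A = c := by
  obtain ⟨i, hi⟩ := hA
  have : {y | ∃ i, H i ⊆ A ∧ y = c} = {c} := by
    ext y
    exact ⟨fun ⟨_, _, hy⟩ => hy, fun hy => ⟨i, hi, hy⟩⟩
  rw [cellSup, this, csSup_singleton]

theorem cellInf_const (hA : ∃ i, H i ⊆ A) : cellInf H (fun _ => c) A = c := by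
  rw [← neg_neg (cellInf _ _ _), ← cellSup_neg]
  exact neg_eq_iff_eq_neg.2 (cellSup_const hA)

theorem cellSup_add_le (hX : ∀ i, |X i| ≤ M) (hY : ∀ i, |Y i| ≤ M') (hA : ∃ i, H i ⊆ A) :
    cellSup H (X + Y) A ≤ cellSup H X A + cellSup H Y A :=
  cellSup_le hA fun _ hi => add_le_add (le_cellSup hX hi) (le_cellSup hY hi)

theorem cellSup_smul (hX : ∀ i, |X i| ≤ M) (hA : ∃ i, H i ⊆ A) (hc : 0 < c) :
    cellSup H (c • X) A = c * cellSup H X A := by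
  have hcX : ∀ i, |(c • X) i| ≤ c * M := fun i => by
    rw [Pi.smul_apply, smul_eq_mul, abs_mul, abs_of_pos hc]
    exact mul_le_mul_of_nonneg_left (hX i) hc.le
  refine le_antisymm (cellSup_le hA fun i hi => ?_) ?_
  · exact mul_le_mul_of_nonneg_left (le_cellSup hX hi) hc.le
  · rw [← le_div_iff₀' hc]
    exact cellSup_le hA fun i hi => (le_div_iff₀' hc).2 (le_cellSup hcX hi)

end Stieltjes

section FinPart

variable {ι : Type*} {H : ι → Set Ω} {𝒜L : Set (Set Ω)} {π : Set Ω → ℝ} {X Y : ι → ℝ}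
  {M M' c : ℝ} {A B : Set Ω} {T T' : Finset (Set Ω)}

theorem isFinPart_univ [Nonempty Ω] (h𝒜L : IsSetField 𝒜L) : IsFinPart 𝒜L {univ} :=
  ⟨by simpa using h𝒜L.1, by simp, by simp, by simp⟩

theorem isFinPart_pair (h𝒜L : IsSetField 𝒜L) (hB : B ∈ 𝒜L) (hBne : B.Nonempty)
    (hBc : Bᶜ.Nonempty) : IsFinPart 𝒜L {B, Bᶜ} := by
  refine ⟨?_, ?_, ?_, by simp⟩
  · simp [insert_subset_iff, hB, h𝒜L.compl_mem hB]
  · simp [hBne, hBc]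
  · simp only [Finset.mem_insert, Finset.mem_singleton]
    rintro C (rfl | rfl) D (rfl | rfl) hCD <;>
      first | exact absurd rfl hCD | exact disjoint_compl_right | exact disjoint_compl_left

theorem IsFinPart.exists_cell (h𝒜L : IsFieldOver H 𝒜L) (hT : IsFinPart 𝒜L T) (hA : A ∈ T) :
    ∃ i, H i ⊆ A :=
  h𝒜L.exists_subset (hT.1 hA) (hT.2.1 A hA)

theorem IsFinPart.eq_of_inter_nonempty (hT : IsFinPart 𝒜L T) (hA : A ∈ T) (hB : B ∈ T)
    (hAB : (A ∩ B).Nonempty) : A = B := by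
  by_contra hne
  exact not_disjoint_iff_nonempty_inter.2 hAB (hT.2.2.1 A hA B hB hne)

theorem exists_common_refinement (h𝒜L : IsSetField 𝒜L) (hT : IsFinPart 𝒜L T)
    (hT' : IsFinPart 𝒜L T') :
    ∃ T'', IsFinPart 𝒜L T'' ∧ ∀ C ∈ T'', (∃ A ∈ T, C ⊆ A) ∧ ∃ B ∈ T', C ⊆ B := by
  classical
  refine ⟨((T ×ˢ T').image fun p => p.1 ∩ p.2).filter Set.Nonempty, ⟨?_, ?_, ?_, ?_⟩, ?_⟩
  · intro C hC
    simp only [Finset.coe_filter, Finset.mem_image, Finset.mem_product] at hC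
    obtain ⟨⟨⟨A, B⟩, ⟨hA, hB⟩, rfl⟩, -⟩ := hC
    exact h𝒜L.inter_mem (hT.1 hA) (hT'.1 hB)
  · intro C hC
    exact (Finset.mem_filter.1 hC).2
  · simp only [Finset.mem_filter, Finset.mem_image, Finset.mem_product]
    rintro _ ⟨⟨⟨A, B⟩, ⟨hA, hB⟩, rfl⟩, -⟩ _ ⟨⟨⟨A', B'⟩, ⟨hA', hB'⟩, rfl⟩, -⟩ hne
    by_cases hAA : A = A'
    · have hBB : B ≠ B' := fun h => hne (by rw [hAA, h])
      exact (hT'.2.2.1 B hB B' hB' hBB).mono inter_subset_right inter_subset_right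
    · exact (hT.2.2.1 A hA A' hA' hAA).mono inter_subset_left inter_subset_left
  · refine eq_univ_of_forall fun x => ?_
    obtain ⟨A, hA, hxA⟩ := mem_sUnion.1 (hT.2.2.2.symm ▸ mem_univ x : x ∈ ⋃₀ (T : Set (Set Ω)))
    obtain ⟨B, hB, hxB⟩ := mem_sUnion.1 (hT'.2.2.2.symm ▸ mem_univ x : x ∈ ⋃₀ (T' : Set (Set Ω)))
    exact mem_sUnion.2 ⟨A ∩ B, by simpa using ⟨⟨A, B, ⟨hA, hB⟩, rfl⟩, x, hxA, hxB⟩, hxA, hxB⟩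
  · simp only [Finset.mem_filter, Finset.mem_image, Finset.mem_product]
    rintro _ ⟨⟨⟨A, B⟩, ⟨hA, hB⟩, rfl⟩, -⟩
    exact ⟨⟨A, hA, inter_subset_left⟩, B, hB, inter_subset_right⟩

theorem upperSum_neg : upperSum H (-X) π T = -lowerSum H X π T := by
  simp [upperSum, lowerSum, cellSup_neg, ← Finset.sum_neg_distrib]

theorem lowerSum_le_upperSum_self (h𝒜L : IsFieldOver H 𝒜L) (hπ : IsFAP 𝒜L π)
    (hX : ∀ i, |X i| ≤ M) (hT : IsFinPart 𝒜L T) : lowerSum H X π T ≤ upperSum H X π T :=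
  Finset.sum_le_sum fun _ hA => mul_le_mul_of_nonneg_right
    (cellInf_le_cellSup hX (hT.exists_cell h𝒜L hA)) (hπ.nonneg (hT.1 hA))

theorem upperSum_le_of_refines (h𝒜L : IsFieldOver H 𝒜L) (hπ : IsFAP 𝒜L π)
    (hX : ∀ i, |X i| ≤ M) (hT : IsFinPart 𝒜L T) (hT' : IsFinPart 𝒜L T')
    (href : ∀ A' ∈ T', ∃ A ∈ T, A' ⊆ A) : upperSum H X π T' ≤ upperSum H X π T := by
  calc upperSum H X π T'
      = ∑ A' ∈ T', ∑ A ∈ T, cellSup H X A' * π (A' ∩ A) :=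
        Finset.sum_congr rfl fun A' hA' => by
          rw [← Finset.mul_sum, ← hπ.eq_sum_inter h𝒜L.1 subset_rfl hT (hT'.1 hA')]
    _ ≤ ∑ A' ∈ T', ∑ A ∈ T, cellSup H X A * π (A' ∩ A) := by
        refine Finset.sum_le_sum fun A' hA' => Finset.sum_le_sum fun A hA => ?_
        rcases (A' ∩ A).eq_empty_or_nonempty with h | h
        · rw [h, hπ.empty h𝒜L.1, mul_zero, mul_zero]
        obtain ⟨A₀, hA₀, hA'A₀⟩ := href A' hA'
        have hA'A : A' ⊆ A :=
          hT.eq_of_inter_nonempty hA₀ hA (h.mono (inter_subset_inter_left _ hA'A₀)) ▸ hA'A₀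
        exact mul_le_mul_of_nonneg_right (cellSup_mono hX (hT'.exists_cell h𝒜L hA') hA'A)
          (hπ.nonneg (h𝒜L.1.inter_mem (hT'.1 hA') (hT.1 hA)))
    _ = upperSum H X π T := by
        refine Finset.sum_comm.trans (Finset.sum_congr rfl fun A hA => ?_)
        simp_rw [← Finset.mul_sum, inter_comm _ A]
        rw [← hπ.eq_sum_inter h𝒜L.1 subset_rfl hT' (hT.1 hA)]

theorem lowerSum_le_of_refines (h𝒜L : IsFieldOver H 𝒜L) (hπ : IsFAP 𝒜L π)
    (hX : ∀ i, |X i| ≤ M) (hT : IsFinPart 𝒜L T) (hT' : IsFinPart 𝒜L T')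
    (href : ∀ A' ∈ T', ∃ A ∈ T, A' ⊆ A) : lowerSum H X π T ≤ lowerSum H X π T' := by
  have h := upperSum_le_of_refines (X := -X) h𝒜L hπ (fun i => (abs_neg (X i)).trans_le (hX i))
    hT hT' href
  rw [upperSum_neg, upperSum_neg] at h
  linarith

theorem lowerSum_le_upperSum (h𝒜L : IsFieldOver H 𝒜L) (hπ : IsFAP 𝒜L π)
    (hX : ∀ i, |X i| ≤ M) (hT : IsFinPart 𝒜L T) (hT' : IsFinPart 𝒜L T') :
    lowerSum H X π T ≤ upperSum H X π T' := by
  obtain ⟨T'', hT'', href⟩ := exists_common_refinement h𝒜L.1 hT hT'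
  calc lowerSum H X π T ≤ lowerSum H X π T'' :=
        lowerSum_le_of_refines h𝒜L hπ hX hT hT'' fun C hC => (href C hC).1
    _ ≤ upperSum H X π T'' := lowerSum_le_upperSum_self h𝒜L hπ hX hT''
    _ ≤ upperSum H X π T' :=
        upperSum_le_of_refines h𝒜L hπ hX hT' hT'' fun C hC => (href C hC).2

theorem upperSum_add_le (h𝒜L : IsFieldOver H 𝒜L) (hπ : IsFAP 𝒜L π) (hX : ∀ i, |X i| ≤ M)
    (hY : ∀ i, |Y i| ≤ M') (hT : IsFinPart 𝒜L T) :
    upperSum H (X + Y) π T ≤ upperSum H X π T + upperSum H Y π T := by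
  rw [upperSum, upperSum, upperSum, ← Finset.sum_add_distrib]
  refine Finset.sum_le_sum fun A hA => ?_
  rw [← add_mul]
  exact mul_le_mul_of_nonneg_right (cellSup_add_le hX hY (hT.exists_cell h𝒜L hA))
    (hπ.nonneg (hT.1 hA))

theorem upperSum_smul (h𝒜L : IsFieldOver H 𝒜L) (hX : ∀ i, |X i| ≤ M) (hT : IsFinPart 𝒜L T)
    (hc : 0 < c) : upperSum H (c • X) π T = c * upperSum H X π T := by
  rw [upperSum, upperSum, Finset.mul_sum]
  exact Finset.sum_congr rfl fun A hA => by
    rw [cellSup_smul hX (hT.exists_cell h𝒜L hA) hc, mul_assoc]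

end FinPart

section StieltjesIntegral

variable {ι : Type*} {H : ι → Set Ω} {𝒜L : Set (Set Ω)} {μ π : Set Ω → ℝ} {X Y : ι → ℝ}
  {M M' c : ℝ} {B : Set Ω} {T : Finset (Set Ω)}

theorem lowerSInt_eq_iSup :
    lowerSInt H 𝒜L X μ = ⨆ T : {T // IsFinPart 𝒜L T}, lowerSum H X μ T := by
  rw [lowerSInt, iSup]
  congr 1
  ext x
  exact ⟨fun ⟨T, hT, hx⟩ => ⟨⟨T, hT⟩, hx.symm⟩, fun ⟨T, hx⟩ => ⟨T, T.2, hx.symm⟩⟩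

theorem upperSInt_eq_iInf :
    upperSInt H 𝒜L X μ = ⨅ T : {T // IsFinPart 𝒜L T}, upperSum H X μ T := by
  rw [upperSInt, iInf]
  congr 1
  ext x
  exact ⟨fun ⟨T, hT, hx⟩ => ⟨⟨T, hT⟩, hx.symm⟩, fun ⟨T, hx⟩ => ⟨T, T.2, hx.symm⟩⟩

theorem upperSInt_smul (h𝒜L : IsFieldOver H 𝒜L) (hX : ∀ i, |X i| ≤ M) (hc : 0 < c) :
    upperSInt H 𝒜L (c • X) π = c * upperSInt H 𝒜L X π := by
  rw [upperSInt_eq_iInf, upperSInt_eq_iInf, Real.mul_iInf_of_nonneg hc.le]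
  exact congrArg iInf (funext fun T => upperSum_smul h𝒜L hX T.2 hc)

variable [Nonempty Ω]

theorem IsSetField.nonempty_finPart (h𝒜L : IsSetField 𝒜L) : Nonempty {T // IsFinPart 𝒜L T} :=
  ⟨⟨_, isFinPart_univ h𝒜L⟩⟩

theorem bddAbove_range_lowerSum (h𝒜L : IsFieldOver H 𝒜L) (hπ : IsFAP 𝒜L π)
    (hX : ∀ i, |X i| ≤ M) : BddAbove (range fun T : {T // IsFinPart 𝒜L T} => lowerSum H X π T) :=
  ⟨_, forall_mem_range.2 fun T => lowerSum_le_upperSum h𝒜L hπ hX T.2 (isFinPart_univ h𝒜L.1)⟩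

theorem bddBelow_range_upperSum (h𝒜L : IsFieldOver H 𝒜L) (hπ : IsFAP 𝒜L π)
    (hX : ∀ i, |X i| ≤ M) : BddBelow (range fun T : {T // IsFinPart 𝒜L T} => upperSum H X π T) :=
  ⟨_, forall_mem_range.2 fun T => lowerSum_le_upperSum h𝒜L hπ hX (isFinPart_univ h𝒜L.1) T.2⟩

theorem lowerSum_le_lowerSInt (h𝒜L : IsFieldOver H 𝒜L) (hπ : IsFAP 𝒜L π)
    (hX : ∀ i, |X i| ≤ M) (hT : IsFinPart 𝒜L T) : lowerSum H X π T ≤ lowerSInt H 𝒜L X π := by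
  rw [lowerSInt_eq_iSup]
  exact le_ciSup (bddAbove_range_lowerSum h𝒜L hπ hX) ⟨T, hT⟩

theorem upperSInt_le_upperSum (h𝒜L : IsFieldOver H 𝒜L) (hπ : IsFAP 𝒜L π)
    (hX : ∀ i, |X i| ≤ M) (hT : IsFinPart 𝒜L T) : upperSInt H 𝒜L X π ≤ upperSum H X π T := by
  rw [upperSInt_eq_iInf]
  exact ciInf_le (bddBelow_range_upperSum h𝒜L hπ hX) ⟨T, hT⟩

theorem lowerSInt_le_upperSInt (h𝒜L : IsFieldOver H 𝒜L) (hπ : IsFAP 𝒜L π)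
    (hX : ∀ i, |X i| ≤ M) : lowerSInt H 𝒜L X π ≤ upperSInt H 𝒜L X π := by
  have := h𝒜L.1.nonempty_finPart
  rw [lowerSInt_eq_iSup, upperSInt_eq_iInf]
  exact ciSup_le fun T => le_ciInf fun T' => lowerSum_le_upperSum h𝒜L hπ hX T.2 T'.2

theorem upperSInt_neg (h𝒜L : IsFieldOver H 𝒜L) (hπ : IsFAP 𝒜L π) (hX : ∀ i, |X i| ≤ M) :
    upperSInt H 𝒜L (-X) π = -lowerSInt H 𝒜L X π := by
  have := h𝒜L.1.nonempty_finPart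
  have hX' : ∀ i, |(-X) i| ≤ M := fun i => (abs_neg (X i)).trans_le (hX i)
  refine le_antisymm ?_ ?_
  · rw [le_neg, lowerSInt_eq_iSup]
    refine ciSup_le fun T => le_neg.1 ?_
    rw [← upperSum_neg]
    exact upperSInt_le_upperSum h𝒜L hπ hX' T.2
  · rw [upperSInt_eq_iInf]
    refine le_ciInf fun T => ?_
    rw [upperSum_neg, neg_le_neg_iff]
    exact lowerSum_le_lowerSInt h𝒜L hπ hX T.2

theorem upperSInt_add_le (h𝒜L : IsFieldOver H 𝒜L) (hπ : IsFAP 𝒜L π) (hX : ∀ i, |X i| ≤ M)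
    (hY : ∀ i, |Y i| ≤ M') :
    upperSInt H 𝒜L (X + Y) π ≤ upperSInt H 𝒜L X π + upperSInt H 𝒜L Y π := by
  have := h𝒜L.1.nonempty_finPart
  rw [upperSInt_eq_iInf (X := X), upperSInt_eq_iInf (X := Y)]
  refine le_ciInf_add_ciInf fun T T' => ?_
  obtain ⟨T'', hT'', href⟩ := exists_common_refinement h𝒜L.1 T.2 T'.2
  calc upperSInt H 𝒜L (X + Y) π ≤ upperSum H (X + Y) π T'' :=
        upperSInt_le_upperSum h𝒜L hπ (fun i => (abs_add_le _ _).trans (add_le_add (hX i) (hY i)))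
          hT''
    _ ≤ upperSum H X π T'' + upperSum H Y π T'' := upperSum_add_le h𝒜L hπ hX hY hT''
    _ ≤ upperSum H X π T + upperSum H Y π T' := add_le_add
        (upperSum_le_of_refines h𝒜L hπ hX T.2 hT'' fun C hC => (href C hC).1)
        (upperSum_le_of_refines h𝒜L hπ hY T'.2 hT'' fun C hC => (href C hC).2)

theorem upperSInt_le_cellSup_mul (h𝒜L : IsFieldOver H 𝒜L) (hπ : IsFAP 𝒜L π)
    (hX : ∀ i, |X i| ≤ M) (hB : B ∈ 𝒜L) (hBne : B.Nonempty) (hX0 : ∀ i, H i ⊆ Bᶜ → X i = 0) :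
    upperSInt H 𝒜L X π ≤ cellSup H X B * π B := by
  rcases Bᶜ.eq_empty_or_nonempty with hBc | hBc
  · rw [compl_empty_iff] at hBc
    subst hBc
    simpa [upperSum] using upperSInt_le_upperSum h𝒜L hπ hX (isFinPart_univ h𝒜L.1)
  · have hzero : cellSup H X Bᶜ = 0 := by
      rw [cellSup_congr (Y := fun _ => 0) hX0, cellSup_const (h𝒜L.exists_subset
        (h𝒜L.1.compl_mem hB) hBc)]
    simpa [upperSum, Finset.sum_pair ne_compl_self, hzero] using
      upperSInt_le_upperSum h𝒜L hπ hX (isFinPart_pair h𝒜L.1 hB hBne hBc)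

theorem cellInf_mul_le_lowerSInt (h𝒜L : IsFieldOver H 𝒜L) (hπ : IsFAP 𝒜L π)
    (hX : ∀ i, |X i| ≤ M) (hB : B ∈ 𝒜L) (hBne : B.Nonempty) (hX0 : ∀ i, H i ⊆ Bᶜ → X i = 0) :
    cellInf H X B * π B ≤ lowerSInt H 𝒜L X π := by
  have h := upperSInt_le_cellSup_mul (X := -X) h𝒜L hπ
    (fun i => (abs_neg (X i)).trans_le (hX i)) hB hBne (fun i hi => by simp [hX0 i hi])
  rw [upperSInt_neg h𝒜L hπ hX, cellSup_neg] at h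
  linarith

end StieltjesIntegral

theorem exists_linearMap_le_sublinear_apply_eq {E : Type*} [AddCommGroup E] [Module ℝ E]
    (N : E → ℝ) (N_hom : ∀ c : ℝ, 0 < c → ∀ x, N (c • x) = c * N x)
    (N_add : ∀ x y, N (x + y) ≤ N x + N y) (v : E) {l : ℝ} (hl : -N (-v) ≤ l) (hu : l ≤ N v) :
    ∃ g : E →ₗ[ℝ] ℝ, g v = l ∧ ∀ x, g x ≤ N x := by
  have N_zero : N 0 = 0 := by
    have h := N_hom 2 two_pos 0
    rw [smul_zero] at h
    linarith
  have hdom : ∀ c : ℝ, c * l ≤ N (c • v) := by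
    intro c
    rcases lt_trichotomy c 0 with hc | rfl | hc
    · rw [← neg_neg c, neg_smul, ← smul_neg, N_hom _ (neg_pos.2 hc)]
      nlinarith
    · simp [N_zero]
    · rw [N_hom c hc]
      exact mul_le_mul_of_nonneg_left hu hc.le
  -- `hdom` at `c` and `-c` makes `c • v ↦ c • l` well defined even when `v = 0`.
  have hzero : ∀ c : ℝ, c • v = 0 → (RingHom.id ℝ) c • l = 0 := by
    intro c hc
    have h₁ := hdom c
    have h₂ := hdom (-c)
    rw [hc, N_zero] at h₁
    rw [neg_smul, hc, neg_zero, N_zero] at h₂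
    simp only [RingHom.id_apply, smul_eq_mul]
    linarith
  obtain ⟨g, hgf, hgN⟩ := exists_extension_of_le_sublinear
    (LinearPMap.mkSpanSingleton' v l hzero) N N_hom N_add (by
      rintro ⟨x, hx⟩
      obtain ⟨c, rfl⟩ := Submodule.mem_span_singleton.1 hx
      rw [LinearPMap.mkSpanSingleton'_apply v l hzero c hx]
      exact hdom c)
  exact ⟨g, (hgf ⟨v, Submodule.mem_span_singleton_self v⟩).trans
    (LinearPMap.mkSpanSingleton'_apply_self v l hzero _), hgN⟩

section JointProbability

open scoped ENNReal

variable [Nonempty Ω] {ι : Type*} {H : ι → Set Ω} {𝒜L 𝒜 : Set (Set Ω)} {π : Set Ω → ℝ}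
  {σ : Set Ω → ι → ℝ} {F B : Set Ω}

theorem exists_linearMap_between_stieltjes (h𝒜L : IsFieldOver H 𝒜L) (hπ : IsFAP 𝒜L π)
    (v : lp (fun _ : ι => ℝ) ∞) {l : ℝ} (hl : lowerSInt H 𝒜L v π ≤ l)
    (hu : l ≤ upperSInt H 𝒜L v π) :
    ∃ g : lp (fun _ : ι => ℝ) ∞ →ₗ[ℝ] ℝ,
      g v = l ∧
        ∀ x : lp (fun _ : ι => ℝ) ∞, lowerSInt H 𝒜L x π ≤ g x ∧ g x ≤ upperSInt H 𝒜L x π := by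
  have hbdd (x : lp (fun _ : ι => ℝ) ∞) (i : ι) : |x i| ≤ ‖x‖ :=
    lp.norm_apply_le_norm ENNReal.top_ne_zero x i
  obtain ⟨g, hgv, hg⟩ := exists_linearMap_le_sublinear_apply_eq
    (fun x : lp (fun _ : ι => ℝ) ∞ => upperSInt H 𝒜L x π)
    (fun c hc x => by simpa only [lp.coeFn_smul] using upperSInt_smul h𝒜L (hbdd x) hc)
    (fun x y => by simpa only [lp.coeFn_add] using upperSInt_add_le h𝒜L hπ (hbdd x) (hbdd y))
    v (by simpa only [lp.coeFn_neg, upperSInt_neg h𝒜L hπ (hbdd v), neg_neg] using hl) hu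
  refine ⟨g, hgv, fun x => ⟨?_, hg x⟩⟩
  have h := hg (-x)
  rw [map_neg, lp.coeFn_neg, upperSInt_neg h𝒜L hπ (hbdd x)] at h
  linarith

theorem exists_additive_between_stieltjes (h𝒜L : IsFieldOver H 𝒜L) (hπ : IsFAP 𝒜L π)
    (h𝒜 : IsSetField 𝒜) (hH : IsPartition H) (hH𝒜 : ∀ i, H i ∈ 𝒜) (hσ : IsStrategy 𝒜 H σ)
    {F₀ : Set Ω} (hF₀ : F₀ ∈ 𝒜) {l : ℝ} (hl : lowerSInt H 𝒜L (fun i => σ F₀ i) π ≤ l)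
    (hu : l ≤ upperSInt H 𝒜L (fun i => σ F₀ i) π) :
    ∃ ν : Set Ω → ℝ, ν F₀ = l ∧
      (∀ A ∈ 𝒜, ∀ B ∈ 𝒜, Disjoint A B → ν (A ∪ B) = ν A + ν B) ∧
      (∀ F ∈ 𝒜, ∀ i, ν (F ∩ H i) = σ F i * ν (H i)) ∧
      ∀ F ∈ 𝒜, lowerSInt H 𝒜L (fun i => σ F i) π ≤ ν F ∧
        ν F ≤ upperSInt H 𝒜L (fun i => σ F i) π := by
  have hmem : ∀ F ∈ 𝒜, Memℓp (fun i => σ F i) ∞ := fun F hF =>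
    memℓp_infty ⟨1, forall_mem_range.2 fun i => hσ.abs_le_one hF i⟩
  let vec (F : Set Ω) (hF : F ∈ 𝒜) : lp (fun _ : ι => ℝ) ∞ := ⟨fun i => σ F i, hmem F hF⟩
  obtain ⟨g, hgF₀, hg⟩ := exists_linearMap_between_stieltjes h𝒜L hπ (vec F₀ hF₀) hl hu
  let ν (F : Set Ω) : ℝ := if hF : F ∈ 𝒜 then g (vec F hF) else 0
  have hν {F} (hF : F ∈ 𝒜) : ν F = g (vec F hF) := dif_pos hF
  refine ⟨ν, (hν hF₀).trans hgF₀, fun A hA B hB hAB => ?_, fun F hF i => ?_,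
    fun F hF => hν hF ▸ hg (vec F hF)⟩
  · have hvec : vec (A ∪ B) (h𝒜.union_mem hA hB) = vec A hA + vec B hB :=
      lp.ext (funext fun i => (hσ i).1.union hA hB hAB)
    rw [hν hA, hν hB, hν (h𝒜.union_mem hA hB), hvec, map_add]
  · have hvec : vec (F ∩ H i) (h𝒜.inter_mem hF (hH𝒜 i)) = σ F i • vec (H i) (hH𝒜 i) :=
      lp.ext (funext fun j => hσ.apply_inter_cell h𝒜 hH hF (hH𝒜 i) j)
    rw [hν (hH𝒜 i), hν (h𝒜.inter_mem hF (hH𝒜 i)), hvec, map_smul, smul_eq_mul]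

def IsStronglyConglomerable (𝒜 𝒜L : Set (Set Ω)) (H : ι → Set Ω) (π : Set Ω → ℝ)
    (σ : Set Ω → ι → ℝ) (μ : Set Ω → ℝ) : Prop :=
  ∀ F ∈ 𝒜, ∀ B ∈ 𝒜L, B.Nonempty →
    π B * cellInf H (fun i => σ F i) B ≤ μ (F ∩ B) ∧ μ (F ∩ B) ≤ π B * cellSup H (fun i => σ F i) B

theorem upperSInt_strategy_inter_le (h𝒜L : IsFieldOver H 𝒜L) (hπ : IsFAP 𝒜L π)
    (h𝒜 : IsSetField 𝒜) (hsub : 𝒜L ⊆ 𝒜) (hσ : IsStrategy 𝒜 H σ) (hF : F ∈ 𝒜) (hB : B ∈ 𝒜L)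
    (hBne : B.Nonempty) :
    upperSInt H 𝒜L (fun i => σ (F ∩ B) i) π ≤ π B * cellSup H (fun i => σ F i) B := by
  rw [mul_comm, ← cellSup_congr fun i hi => hσ.apply_inter_of_subset h𝒜 hF (hsub hB) hi]
  exact upperSInt_le_cellSup_mul h𝒜L hπ (hσ.abs_le_one (h𝒜.inter_mem hF (hsub hB))) hB hBne
    fun i hi => hσ.apply_inter_of_subset_compl h𝒜 hF (hsub hB) hi

theorem cellInf_mul_le_lowerSInt_strategy_inter (h𝒜L : IsFieldOver H 𝒜L) (hπ : IsFAP 𝒜L π)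
    (h𝒜 : IsSetField 𝒜) (hsub : 𝒜L ⊆ 𝒜) (hσ : IsStrategy 𝒜 H σ) (hF : F ∈ 𝒜) (hB : B ∈ 𝒜L)
    (hBne : B.Nonempty) :
    π B * cellInf H (fun i => σ F i) B ≤ lowerSInt H 𝒜L (fun i => σ (F ∩ B) i) π := by
  rw [mul_comm, ← cellInf_congr fun i hi => hσ.apply_inter_of_subset h𝒜 hF (hsub hB) hi]
  exact cellInf_mul_le_lowerSInt h𝒜L hπ (hσ.abs_le_one (h𝒜.inter_mem hF (hsub hB))) hB hBne
    fun i hi => hσ.apply_inter_of_subset_compl h𝒜 hF (hsub hB) hi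

theorem exists_joint_apply_eq (h𝒜L : IsFieldOver H 𝒜L) (hπ : IsFAP 𝒜L π)
    (h𝒜 : IsSetField 𝒜) (hsub : 𝒜L ⊆ 𝒜) (hH : IsPartition H) (hσ : IsStrategy 𝒜 H σ)
    {F₀ : Set Ω} (hF₀ : F₀ ∈ 𝒜) {l : ℝ} (hl : lowerSInt H 𝒜L (fun i => σ F₀ i) π ≤ l)
    (hu : l ≤ upperSInt H 𝒜L (fun i => σ F₀ i) π) :
    ∃ ν : Set Ω → ℝ, IsFAP 𝒜 ν ∧ ν F₀ = l ∧ (∀ B ∈ 𝒜L, ν B = π B) ∧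
      (∀ F ∈ 𝒜, ∀ i, ν (F ∩ H i) = σ F i * ν (H i)) ∧ IsStronglyConglomerable 𝒜 𝒜L H π σ ν := by
  obtain ⟨ν, hνF₀, hadd, hprod, hbetween⟩ := exists_additive_between_stieltjes h𝒜L hπ h𝒜 hH
    (fun i => hsub (h𝒜L.2.1 i)) hσ hF₀ hl hu
  have hcong : IsStronglyConglomerable 𝒜 𝒜L H π σ ν := fun F hF B hB hBne =>
    ⟨(cellInf_mul_le_lowerSInt_strategy_inter h𝒜L hπ h𝒜 hsub hσ hF hB hBne).trans
      (hbetween _ (h𝒜.inter_mem hF (hsub hB))).1,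
     (hbetween _ (h𝒜.inter_mem hF (hsub hB))).2.trans
      (upperSInt_strategy_inter_le h𝒜L hπ h𝒜 hsub hσ hF hB hBne)⟩
  have hprior : ∀ B ∈ 𝒜L, ν B = π B := by
    intro B hB
    rcases B.eq_empty_or_nonempty with rfl | hBne
    · have h := hadd ∅ h𝒜.empty_mem ∅ h𝒜.empty_mem (disjoint_empty ∅)
      rw [empty_union] at h
      rw [hπ.empty h𝒜L.1]
      linarith
    have hcell := h𝒜L.exists_subset hB hBne
    have h := hcong univ h𝒜.1 B hB hBne
    simp only [fun i => (hσ i).2 univ h𝒜.1 (subset_univ _), cellInf_const hcell,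
      cellSup_const hcell, univ_inter, mul_one] at h
    exact le_antisymm h.2 h.1
  refine ⟨ν, ⟨fun F hF => ?_, by rw [hprior univ h𝒜L.1.1, hπ.2.1], hadd⟩, hνF₀, hprior, hprod,
    hcong⟩
  have hcell := h𝒜L.exists_subset h𝒜L.1.1 univ_nonempty
  have h := hcong F hF univ h𝒜L.1.1 univ_nonempty
  rw [inter_univ, hπ.2.1, one_mul, one_mul] at h
  exact ⟨(le_cellInf hcell fun i _ => (hσ i).1.nonneg hF).trans h.1,
    h.2.trans (cellSup_le hcell fun i _ => (hσ i).1.le_one hF)⟩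

end JointProbability

section LexicographicConditioning

variable {𝒜 𝔉 : Set (Set Ω)} {ρs : List (Set Ω → ℝ)} {E K : Set Ω} {c : ℝ}

noncomputable def lexCond : List (Set Ω → ℝ) → Set Ω → Set Ω → ℝ
  | [], _, _ => 0
  | ρ :: ρs, E, K => if 0 < ρ K then ρ (E ∩ K) / ρ K else lexCond ρs E K

theorem lexCond_inter_self (ρs : List (Set Ω → ℝ)) (E K : Set Ω) :
    lexCond ρs (E ∩ K) K = lexCond ρs E K := by
  induction ρs with
  | nil => rfl
  | cons ρ ρs ih => simp only [lexCond, inter_assoc, inter_self, ih]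

theorem lexCond_mem_Icc (h𝒜 : IsSetField 𝒜) (hρs : ∀ ρ ∈ ρs, IsFAP 𝒜 ρ) (hE : E ∈ 𝒜)
    (hK : K ∈ 𝒜) : lexCond ρs E K ∈ Icc 0 1 := by
  induction ρs with
  | nil => simp [lexCond]
  | cons ρ ρs ih =>
    have hρ := hρs ρ List.mem_cons_self
    rw [lexCond]
    split_ifs with hK0
    · exact ⟨div_nonneg (hρ.nonneg (h𝒜.inter_mem hE hK)) hK0.le,
        (div_le_one hK0).2 (hρ.mono h𝒜 (h𝒜.inter_mem hE hK) hK inter_subset_right)⟩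
    · exact ih fun ρ' h => hρs ρ' (List.mem_cons_of_mem _ h)

theorem lexCond_append (h : ∃ ρ ∈ ρs, 0 < ρ K) (ρs' : List (Set Ω → ℝ)) (E : Set Ω) :
    lexCond (ρs ++ ρs') E K = lexCond ρs E K := by
  induction ρs with
  | nil => simp at h
  | cons ρ ρs ih =>
    simp only [List.cons_append, lexCond]
    split_ifs with hK0
    · rfl
    · exact ih (((List.exists_mem_cons_iff _ _ _).1 h).resolve_left hK0)

theorem lexCond_eq_of_forall (h : ∃ ρ ∈ ρs, 0 < ρ K) (hc : ∀ ρ ∈ ρs, ρ (E ∩ K) = c * ρ K) :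
    lexCond ρs E K = c := by
  induction ρs with
  | nil => simp at h
  | cons ρ ρs ih =>
    rw [lexCond]
    split_ifs with hK0
    · rw [hc ρ List.mem_cons_self, mul_div_assoc, div_self hK0.ne', mul_one]
    · exact ih (((List.exists_mem_cons_iff _ _ _).1 h).resolve_left hK0)
        fun ρ' h' => hc ρ' (List.mem_cons_of_mem _ h')

theorem exists_lexCond_eq_div (h𝒜 : IsSetField 𝒜) (hρs : ∀ ρ ∈ ρs, IsFAP 𝒜 ρ) (hK : K ∈ 𝒜)
    (h : ∃ ρ ∈ ρs, 0 < ρ K) :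
    ∃ ρ ∈ ρs, 0 < ρ K ∧
      ∀ L ∈ 𝒜, L ⊆ K → 0 < ρ L → ∀ E, lexCond ρs E L = ρ (E ∩ L) / ρ L := by
  induction ρs with
  | nil => simp at h
  | cons ρ ρs ih =>
    by_cases hK0 : 0 < ρ K
    · exact ⟨ρ, List.mem_cons_self, hK0, fun L _ _ hL E => by rw [lexCond, if_pos hL]⟩
    obtain ⟨ρ', hρ', hρ'K, hval⟩ := ih (fun ρ' h' => hρs ρ' (List.mem_cons_of_mem _ h'))
      (((List.exists_mem_cons_iff _ _ _).1 h).resolve_left hK0)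
    refine ⟨ρ', List.mem_cons_of_mem _ hρ', hρ'K, fun L hL hLK hL0 E => ?_⟩
    have hρL : ¬0 < ρ L := fun h =>
      hK0 (h.trans_le ((hρs ρ List.mem_cons_self).mono h𝒜 hL hK hLK))
    rw [lexCond, if_neg hρL, hval L hL hLK hL0]

theorem isFCP_lexCond (h𝒜 : IsSetField 𝒜) (hρs : ∀ ρ ∈ ρs, IsFAP 𝒜 ρ) (h𝔉 : 𝔉 ⊆ 𝒜)
    (hcharged : ∀ K ∈ 𝔉, K.Nonempty → ∃ ρ ∈ ρs, 0 < ρ K) : IsFCP 𝔉 (lexCond ρs) := by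
  refine ⟨fun E _ K _ _ => (lexCond_inter_self ρs E K).symm, fun K hK hKne => ?_,
    fun E hE F hF K hK hKne _ => ?_⟩
  all_goals
    obtain ⟨ρ, hρ, hρK, hval⟩ := exists_lexCond_eq_div h𝒜 hρs (h𝔉 hK) (hcharged K hK hKne)
    have hρ𝒜 := hρs ρ hρ
    have hvalK := hval K (h𝔉 hK) subset_rfl hρK
  · refine ⟨fun A hA => lexCond_mem_Icc h𝒜 hρs (h𝔉 hA) (h𝔉 hK), ?_, fun A hA B hB hAB => ?_⟩
    · simp only [hvalK, univ_inter, div_self hρK.ne']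
    · simp only [hvalK]
      rw [union_inter_distrib_right, ← add_div,
        hρ𝒜.union (h𝒜.inter_mem (h𝔉 hA) (h𝔉 hK)) (h𝒜.inter_mem (h𝔉 hB) (h𝔉 hK))
          (hAB.mono inter_subset_left inter_subset_left)]
  · have hEK := h𝒜.inter_mem (h𝔉 hE) (h𝔉 hK)
    rw [hvalK, hvalK, show E ∩ F ∩ K = F ∩ (E ∩ K) by rw [inter_comm E F, inter_assoc]]
    rcases (hρ𝒜.nonneg hEK).lt_or_eq with hpos | hzero
    · rw [hval _ hEK inter_subset_right hpos]
      field_simp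
    · rw [← hzero, hρ𝒜.inter_eq_zero h𝒜 (h𝔉 hF) hEK hzero.symm]
      simp

end LexicographicConditioning

section ConditionalAssessments

variable {ι : Type*} {H : ι → Set Ω} {𝒜 𝔉 𝔉' : Set (Set Ω)} {σ : Set Ω → ι → ℝ}
  {ν : Set Ω → ℝ} {q q' : Set Ω → Set Ω → ℝ} {E K : Set Ω}

def unitCube : Set (Set Ω → Set Ω → ℝ) :=
  univ.pi fun _ => univ.pi fun _ => Icc 0 1

theorem isCompact_unitCube : IsCompact (unitCube : Set (Set Ω → Set Ω → ℝ)) :=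
  isCompact_univ_pi fun _ => isCompact_univ_pi fun _ => isCompact_Icc

-- A full conditional probability on `𝒜` is unconstrained off `𝒜 × 𝒜⁰`; clamping moves it into
-- the compact cube without changing it there (`IsFCP.congr`).
noncomputable def clampUnit (q : Set Ω → Set Ω → ℝ) : Set Ω → Set Ω → ℝ :=
  fun E K => projIcc 0 1 zero_le_one (q E K)

theorem clampUnit_mem_unitCube (q : Set Ω → Set Ω → ℝ) : clampUnit q ∈ unitCube :=
  fun E _ K _ => (projIcc 0 1 zero_le_one (q E K)).2

theorem clampUnit_apply_of_mem (h : q E K ∈ Icc 0 1) : clampUnit q E K = q E K := by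
  simp [clampUnit, projIcc_of_mem _ h]

def ExtendsJointStrategyOn (𝔉 : Set (Set Ω)) (ν : Set Ω → ℝ) (H : ι → Set Ω)
    (σ : Set Ω → ι → ℝ) (q : Set Ω → Set Ω → ℝ) : Prop :=
  (∀ B ∈ 𝔉, q B univ = ν B) ∧ ∀ F ∈ 𝔉, ∀ i, H i ∈ 𝔉 → q F (H i) = σ F i

theorem IsFCP.mem_Icc (hq : IsFCP 𝔉 q) (hE : E ∈ 𝔉) (hK : K ∈ 𝔉) (hKne : K.Nonempty) :
    q E K ∈ Icc 0 1 :=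
  (hq.2.1 K hK hKne).1 E hE

theorem IsFCP.mono (hq : IsFCP 𝔉' q) (h : 𝔉 ⊆ 𝔉') : IsFCP 𝔉 q :=
  ⟨fun E hE K hK => hq.1 E (h hE) K (h hK),
    fun K hK hKne => ⟨fun A hA => (hq.2.1 K (h hK) hKne).1 A (h hA),
      (hq.2.1 K (h hK) hKne).2.1, fun A hA B hB => (hq.2.1 K (h hK) hKne).2.2 A (h hA) B (h hB)⟩,
    fun E hE F hF K hK => hq.2.2 E (h hE) F (h hF) K (h hK)⟩

theorem IsFCP.congr (h𝒜 : IsSetField 𝒜) (h𝔉 : 𝔉 ⊆ 𝒜) (hq : IsFCP 𝔉 q)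
    (hqq' : ∀ E ∈ 𝒜, ∀ K ∈ 𝒜, K.Nonempty → q E K = q' E K) : IsFCP 𝔉 q' := by
  obtain ⟨h₁, h₂, h₃⟩ := hq
  refine ⟨fun E hE K hK hKne => ?_, fun K hK hKne => ⟨fun A hA => ?_, ?_, fun A hA B hB hAB => ?_⟩,
    fun E hE F hF K hK hKne hEKne => ?_⟩
  · rw [← hqq' E (h𝔉 hE) K (h𝔉 hK) hKne, ← hqq' _ (h𝒜.inter_mem (h𝔉 hE) (h𝔉 hK)) K (h𝔉 hK) hKne]
    exact h₁ E hE K hK hKne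
  · beta_reduce
    rw [← hqq' A (h𝔉 hA) K (h𝔉 hK) hKne]
    exact (h₂ K hK hKne).1 A hA
  · beta_reduce
    rw [← hqq' univ h𝒜.1 K (h𝔉 hK) hKne]
    exact (h₂ K hK hKne).2.1
  · beta_reduce
    rw [← hqq' A (h𝔉 hA) K (h𝔉 hK) hKne, ← hqq' B (h𝔉 hB) K (h𝔉 hK) hKne,
      ← hqq' _ (h𝒜.union_mem (h𝔉 hA) (h𝔉 hB)) K (h𝔉 hK) hKne]
    exact (h₂ K hK hKne).2.2 A hA B hB hAB
  · rw [← hqq' _ (h𝒜.inter_mem (h𝔉 hE) (h𝔉 hF)) K (h𝔉 hK) hKne, ← hqq' E (h𝔉 hE) K (h𝔉 hK) hKne,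
      ← hqq' F (h𝔉 hF) _ (h𝒜.inter_mem (h𝔉 hE) (h𝔉 hK)) hEKne]
    exact h₃ E hE F hF K hK hKne hEKne

theorem isFCP_of_forall_finset (h : ∀ G : Finset (Set Ω), IsFCP (↑G ∩ 𝒜) q) : IsFCP 𝒜 q := by
  have hmem {G : Finset (Set Ω)} {A : Set Ω} (hAG : A ∈ G) (hA : A ∈ 𝒜) : A ∈ ↑G ∩ 𝒜 :=
    ⟨hAG, hA⟩
  refine ⟨fun E hE K hK => (h {E, K}).1 E (hmem (by simp) hE) K (hmem (by simp) hK),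
    fun K hK hKne => ⟨fun A hA => ?_, ?_, fun A hA B hB => ?_⟩,
    fun E hE F hF K hK => (h {E, F, K}).2.2 E (hmem (by simp) hE) F (hmem (by simp) hF) K
      (hmem (by simp) hK)⟩
  · exact ((h {A, K}).2.1 K (hmem (by simp) hK) hKne).1 A (hmem (by simp) hA)
  · exact ((h {K}).2.1 K (hmem (by simp) hK) hKne).2.1
  · exact ((h {A, B, K}).2.1 K (hmem (by simp) hK) hKne).2.2 A (hmem (by simp) hA) B
      (hmem (by simp) hB)

theorem isClosed_setOf_isFCP_extendsJointStrategyOn (𝔉 : Set (Set Ω)) (ν : Set Ω → ℝ)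
    (H : ι → Set Ω) (σ : Set Ω → ι → ℝ) :
    IsClosed {q | IsFCP 𝔉 q ∧ ExtendsJointStrategyOn 𝔉 ν H σ q} := by
  simp only [IsFCP, IsFAP, ExtendsJointStrategyOn, Set.ofPred_and, Set.ofPred_forall]
  repeat' first
    | apply IsClosed.inter
    | (apply isClosed_iInter; intro)
    | (apply isClosed_eq <;> fun_prop)
    | (apply isClosed_le <;> fun_prop)

theorem isFAP_indicator (𝒜 : Set (Set Ω)) (ω : Ω) : IsFAP 𝒜 fun A => A.indicator 1 ω := by
  refine ⟨fun A _ => ?_, by simp, fun A _ B _ hAB =>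
    congrFun (indicator_union_of_disjoint hAB 1) ω⟩
  by_cases hω : ω ∈ A <;> simp [hω]

/-- Lexicographic conditioning along `ν`, the `σ (·|H i)` with `H i ∈ 𝔉`, and point masses in
the members of `𝔉`: the point masses charge every nonempty member of `𝔉`, and the first layer
charging `H i` is `ν` or `σ (·|H i)`, both of which disintegrate along `σ` at `H i`. -/
theorem exists_isFCP_extendsJointStrategyOn_of_finite [Nonempty Ω] (h𝒜 : IsSetField 𝒜)
    (hH : IsPartition H) (hH𝒜 : ∀ i, H i ∈ 𝒜) (hσ : IsStrategy 𝒜 H σ) (hν : IsFAP 𝒜 ν)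
    (hνσ : ∀ F ∈ 𝒜, ∀ i, ν (F ∩ H i) = σ F i * ν (H i)) (h𝔉 : 𝔉 ⊆ 𝒜) (hfin : 𝔉.Finite) :
    ∃ q ∈ unitCube, IsFCP 𝔉 q ∧ ExtendsJointStrategyOn 𝔉 ν H σ q := by
  have hcells : {i | H i ∈ 𝔉}.Finite := hfin.preimage hH.injective.injOn
  set layers₁ : List (Set Ω → ℝ) := ν :: hcells.toFinset.toList.map fun i A => σ A i
  set layers := layers₁ ++
    hfin.toFinset.toList.map fun B A => A.indicator 1 (Classical.epsilon (· ∈ B))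
  have hlayers₁ : ∀ ρ ∈ layers₁, IsFAP 𝒜 ρ := by
    simp only [layers₁, List.mem_cons, List.mem_map]
    rintro ρ (rfl | ⟨i, -, rfl⟩)
    exacts [hν, (hσ i).1]
  have hlayers : ∀ ρ ∈ layers, IsFAP 𝒜 ρ := by
    simp only [layers, List.mem_append, List.mem_map]
    rintro ρ (hρ | ⟨B, -, rfl⟩)
    exacts [hlayers₁ ρ hρ, isFAP_indicator 𝒜 _]
  have hcharged : ∀ K ∈ 𝔉, K.Nonempty → ∃ ρ ∈ layers, 0 < ρ K := fun K hK hKne =>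
    ⟨_, List.mem_append_right _ (List.mem_map.2 ⟨K, by simpa using hK, rfl⟩),
      by simp [Classical.epsilon_spec hKne]⟩
  have hagree : ∀ E ∈ 𝒜, ∀ K ∈ 𝒜, K.Nonempty →
      lexCond layers E K = clampUnit (lexCond layers) E K :=
    fun E hE K hK _ => (clampUnit_apply_of_mem (lexCond_mem_Icc h𝒜 hlayers hE hK)).symm
  refine ⟨_, clampUnit_mem_unitCube _, (isFCP_lexCond h𝒜 hlayers h𝔉 hcharged).congr h𝒜 h𝔉 hagree,
    fun B hB => ?_, fun F hF i hi => ?_⟩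
  · rw [← hagree B (h𝔉 hB) univ h𝒜.1 univ_nonempty]
    simp [layers, layers₁, lexCond, hν.2.1]
  · have hi₁ : (fun A => σ A i) ∈ layers₁ :=
      List.mem_cons_of_mem _ (List.mem_map.2 ⟨i, by simpa using hi, rfl⟩)
    have hcharged₁ : ∃ ρ ∈ layers₁, 0 < ρ (H i) :=
      ⟨_, hi₁, by simp [(hσ i).2 _ (hH𝒜 i) subset_rfl]⟩
    rw [← hagree F (h𝔉 hF) (H i) (hH𝒜 i) (hH.1 i), lexCond_append hcharged₁]
    refine lexCond_eq_of_forall hcharged₁ ?_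
    simp only [layers₁, List.mem_cons, List.mem_map]
    rintro ρ (rfl | ⟨j, -, rfl⟩)
    exacts [hνσ F (h𝔉 hF) i, hσ.apply_inter_cell h𝒜 hH (h𝔉 hF) (hH𝒜 i) j]

theorem exists_isFCP_extendsJointStrategyOn [Nonempty Ω] (h𝒜 : IsSetField 𝒜)
    (hH : IsPartition H) (hH𝒜 : ∀ i, H i ∈ 𝒜) (hσ : IsStrategy 𝒜 H σ) (hν : IsFAP 𝒜 ν)
    (hνσ : ∀ F ∈ 𝒜, ∀ i, ν (F ∩ H i) = σ F i * ν (H i)) :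
    ∃ P, IsFCP 𝒜 P ∧ ExtendsJointStrategyOn 𝒜 ν H σ P := by
  let C (G : Finset (Set Ω)) : Set (Set Ω → Set Ω → ℝ) :=
    unitCube ∩ {q | IsFCP (↑G ∩ 𝒜) q ∧ ExtendsJointStrategyOn (↑G ∩ 𝒜) ν H σ q}
  have hC_anti {G G' : Finset (Set Ω)} (hGG' : G ⊆ G') : C G' ⊆ C G := by
    have h𝔉 : (↑G ∩ 𝒜 : Set (Set Ω)) ⊆ ↑G' ∩ 𝒜 := inter_subset_inter_left _ (by simpa using hGG')
    exact fun q ⟨hq, hFCP, hext⟩ =>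
      ⟨hq, hFCP.mono h𝔉, fun B hB => hext.1 B (h𝔉 hB), fun F hF i hi => hext.2 F (h𝔉 hF) i (h𝔉 hi)⟩
  have hC_closed (G : Finset (Set Ω)) : IsClosed (C G) :=
    isCompact_unitCube.isClosed.inter (isClosed_setOf_isFCP_extendsJointStrategyOn _ _ _ _)
  obtain ⟨q, hq⟩ := IsCompact.nonempty_iInter_of_directed_nonempty_isCompact_isClosed C
    (fun G G' => ⟨G ∪ G', hC_anti Finset.subset_union_left, hC_anti Finset.subset_union_right⟩)
    (fun G => exists_isFCP_extendsJointStrategyOn_of_finite h𝒜 hH hH𝒜 hσ hν hνσ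
      inter_subset_right (G.finite_toSet.inter_of_left 𝒜))
    (fun G => isCompact_unitCube.of_isClosed_subset (hC_closed G) inter_subset_left) hC_closed
  have hqG (G : Finset (Set Ω)) := (mem_iInter.1 hq G).2
  exact ⟨q, isFCP_of_forall_finset fun G => (hqG G).1,
    fun B hB => (hqG {B}).2.1 B ⟨by simp, hB⟩,
    fun F hF i hi => (hqG {F, H i}).2.2 F ⟨by simp, hF⟩ i ⟨by simp, hi⟩⟩

end ConditionalAssessments

section StronglyConglomerable

variable [Nonempty Ω] {ι : Type*} {H : ι → Set Ω} {𝒜L 𝒜 : Set (Set Ω)} {π : Set Ω → ℝ}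
  {σ : Set Ω → ι → ℝ} {F : Set Ω} {μ : Set Ω → ℝ}

theorem exists_mem_PscSet_apply_eq (h𝒜L : IsFieldOver H 𝒜L) (hπ : IsFAP 𝒜L π)
    (h𝒜 : IsSetField 𝒜) (hsub : 𝒜L ⊆ 𝒜) (hH : IsPartition H) (hσ : IsStrategy 𝒜 H σ)
    (hF : F ∈ 𝒜) {l : ℝ} (hl : lowerSInt H 𝒜L (fun i => σ F i) π ≤ l)
    (hu : l ≤ upperSInt H 𝒜L (fun i => σ F i) π) :
    ∃ μ ∈ PscSet 𝒜 𝒜L H π σ, μ F = l := by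
  have hH𝒜 : ∀ i, H i ∈ 𝒜 := fun i => hsub (h𝒜L.2.1 i)
  obtain ⟨ν, hν, hνF, hprior, hνσ, hcong⟩ := exists_joint_apply_eq h𝒜L hπ h𝒜 hsub hH hσ hF hl hu
  obtain ⟨P, hP, hPν, hPσ⟩ := exists_isFCP_extendsJointStrategyOn h𝒜 hH hH𝒜 hσ hν hνσ
  refine ⟨fun F => P F univ, ⟨⟨P, ⟨hP, fun B hB => (hPν B (hsub hB)).trans (hprior B hB),
    fun F hF i => hPσ F hF i (hH𝒜 i)⟩, rfl⟩, fun F hF B hB hBne => ?_⟩, (hPν F hF).trans hνF⟩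
  beta_reduce
  rw [hPν _ (h𝒜.inter_mem hF (hsub hB))]
  exact hcong F hF B hB hBne

theorem mem_Icc_of_mem_PscSet (h𝒜L : IsFieldOver H 𝒜L) (h𝒜 : IsSetField 𝒜) (hsub : 𝒜L ⊆ 𝒜)
    (hμ : μ ∈ PscSet 𝒜 𝒜L H π σ) (hF : F ∈ 𝒜) :
    μ F ∈ Icc (lowerSInt H 𝒜L (fun i => σ F i) π) (upperSInt H 𝒜L (fun i => σ F i) π) := by
  obtain ⟨⟨P, hP, rfl⟩, hcong⟩ := hμ
  have hPuniv : IsFAP 𝒜 fun F => P F univ := hP.1.2.1 univ h𝒜.1 univ_nonempty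
  have hsplit (T : {T // IsFinPart 𝒜L T}) : P F univ = ∑ A ∈ T.1, P (F ∩ A) univ :=
    hPuniv.eq_sum_inter h𝒜 hsub T.2 hF
  have hcell (T : {T // IsFinPart 𝒜L T}) {A} (hA : A ∈ T.1) :=
    hcong F hF A (T.2.1 hA) (T.2.2.1 A hA)
  have := h𝒜L.1.nonempty_finPart
  rw [lowerSInt_eq_iSup, upperSInt_eq_iInf]
  refine ⟨ciSup_le fun T => ?_, le_ciInf fun T => ?_⟩ <;> beta_reduce <;> rw [hsplit T]
  · exact Finset.sum_le_sum fun A hA => (mul_comm _ _).trans_le (hcell T hA).1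
  · exact Finset.sum_le_sum fun A hA => (hcell T hA).2.trans_eq (mul_comm _ _)

theorem restrictDom_image_PscSet_eq (h𝒜 : IsSetField 𝒜) (hsub : 𝒜L ⊆ 𝒜) (hH : IsPartition H)
    (hH𝒜 : ∀ i, H i ∈ 𝒜) :
    restrictDom 𝒜 '' PscSet 𝒜 𝒜L H π σ = (fun q => restrictDom 𝒜 fun F => q F univ) ''
      (unitCube ∩ {q | q ∈ FCPSet 𝒜 𝒜L H π σ ∧
        IsStronglyConglomerable 𝒜 𝒜L H π σ fun F => q F univ}) := by
  refine Subset.antisymm ?_ ?_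
  · rintro _ ⟨_, ⟨⟨P, hP, rfl⟩, hcong⟩, rfl⟩
    have hagree : ∀ E ∈ 𝒜, ∀ K ∈ 𝒜, K.Nonempty → P E K = clampUnit P E K :=
      fun E hE K hK hKne => (clampUnit_apply_of_mem (hP.1.mem_Icc hE hK hKne)).symm
    have huniv (E : Set Ω) (hE : E ∈ 𝒜) := hagree E hE univ h𝒜.1 univ_nonempty
    refine ⟨clampUnit P, ⟨clampUnit_mem_unitCube P, ⟨hP.1.congr h𝒜 subset_rfl hagree,
      fun B hB => (huniv B (hsub hB)).symm.trans (hP.2.1 B hB), fun F hF i => ?_⟩,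
      fun F hF B hB hBne => ?_⟩, funext fun A => (huniv A A.2).symm⟩
    · exact (hagree F hF (H i) (hH𝒜 i) (hH.1 i)).symm.trans (hP.2.2 F hF i)
    · beta_reduce
      rw [← huniv _ (h𝒜.inter_mem hF (hsub hB))]
      exact hcong F hF B hB hBne
  · rintro _ ⟨q, ⟨-, hq, hcong⟩, rfl⟩
    exact ⟨_, ⟨⟨q, hq, rfl⟩, hcong⟩, rfl⟩

theorem isCompact_restrictDom_image_PscSet (h𝒜 : IsSetField 𝒜) (hsub : 𝒜L ⊆ 𝒜)
    (hH : IsPartition H) (hH𝒜 : ∀ i, H i ∈ 𝒜) :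
    IsCompact (restrictDom 𝒜 '' PscSet 𝒜 𝒜L H π σ) := by
  have hclosed : IsClosed {q : Set Ω → Set Ω → ℝ | q ∈ FCPSet 𝒜 𝒜L H π σ ∧
      IsStronglyConglomerable 𝒜 𝒜L H π σ fun F => q F univ} := by
    simp only [FCPSet, IsFCP, IsFAP, ExtendsPriorStrategy, IsStronglyConglomerable,
      Set.ofPred_and, Set.ofPred_forall]
    repeat' first
      | apply IsClosed.inter
      | (apply isClosed_iInter; intro)
      | (apply isClosed_eq <;> fun_prop)
      | (apply isClosed_le <;> fun_prop)
  rw [restrictDom_image_PscSet_eq h𝒜 hsub hH hH𝒜]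
  exact (isCompact_unitCube.inter_right hclosed).image
    (continuous_pi fun A => (continuous_apply univ).comp (continuous_apply A.1))

end StronglyConglomerable

theorem statement10_general {Ω ι κ : Type*} [Nonempty Ω] (H : ι → Set Ω) (E : κ → Set Ω)
    (𝒜L 𝒜E 𝒜 : Set (Set Ω))
    (hH : IsPartition H)
    (h𝒜L : IsFieldOver H 𝒜L)
    (h𝒜 : IsJointField H E 𝒜L 𝒜E 𝒜)
    (π : Set Ω → ℝ) (hπ : IsFAP 𝒜L π)
    (σ : Set Ω → ι → ℝ) (hσ : IsStrategy 𝒜 H σ) :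
    (restrictDom 𝒜 '' PscSet 𝒜 𝒜L H π σ).Nonempty ∧
    IsCompact (restrictDom 𝒜 '' PscSet 𝒜 𝒜L H π σ) ∧
    ∀ F ∈ 𝒜,
      IsLeast {x | ∃ μ ∈ PscSet 𝒜 𝒜L H π σ, x = μ F}
        (lowerSInt H 𝒜L (fun i => σ F i) π) ∧
      IsGreatest {x | ∃ μ ∈ PscSet 𝒜 𝒜L H π σ, x = μ F}
        (upperSInt H 𝒜L (fun i => σ F i) π) := by
  obtain ⟨h𝒜f, hsub, -⟩ := h𝒜
  have hH𝒜 : ∀ i, H i ∈ 𝒜 := fun i => hsub (h𝒜L.2.1 i)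
  have hlu {F} (hF : F ∈ 𝒜) := lowerSInt_le_upperSInt h𝒜L hπ (hσ.abs_le_one hF)
  have hattain {F l} (hF : F ∈ 𝒜) := exists_mem_PscSet_apply_eq h𝒜L hπ h𝒜f hsub hH hσ hF (l := l)
  have hbounds {F} (hF : F ∈ 𝒜) {x} : x ∈ {x | ∃ μ ∈ PscSet 𝒜 𝒜L H π σ, x = μ F} →
      x ∈ Icc (lowerSInt H 𝒜L (fun i => σ F i) π) (upperSInt H 𝒜L (fun i => σ F i) π) := by
    rintro ⟨μ, hμ, rfl⟩
    exact mem_Icc_of_mem_PscSet h𝒜L h𝒜f hsub hμ hF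
  refine ⟨?_, isCompact_restrictDom_image_PscSet h𝒜f hsub hH hH𝒜, fun F hF => ⟨⟨?_, ?_⟩, ?_, ?_⟩⟩
  · obtain ⟨μ, hμ, -⟩ := hattain h𝒜f.1 le_rfl (hlu h𝒜f.1)
    exact ⟨_, μ, hμ, rfl⟩
  · obtain ⟨μ, hμ, hμF⟩ := hattain hF le_rfl (hlu hF)
    exact ⟨μ, hμ, hμF.symm⟩
  · exact fun x hx => (hbounds hF hx).1
  · obtain ⟨μ, hμ, hμF⟩ := hattain hF (hlu hF) le_rfl
    exact ⟨μ, hμ, hμF.symm⟩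
  · exact fun x hx => (hbounds hF hx).2

/-- `𝒫^sc` is a nonempty compact subset of `[0,1]^𝒜` and its envelopes
are attained and equal the lower and upper Stieltjes integrals of `σ(F|·)` w.r.t. `π`. -/
theorem statement10 {Ω ι κ : Type*} [Nonempty Ω] (H : ι → Set Ω) (E : κ → Set Ω)
    (𝒜L 𝒜E 𝒜 : Set (Set Ω))
    (hH : IsPartition H) (hE : IsPartition E)
    (h𝒜L : IsFieldOver H 𝒜L) (h𝒜E : IsFieldOver E 𝒜E)
    (h𝒜 : IsJointField H E 𝒜L 𝒜E 𝒜)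
    (π : Set Ω → ℝ) (hπ : IsFAP 𝒜L π)
    (σ : Set Ω → ι → ℝ) (hσ : IsStrategy 𝒜 H σ) :
    (restrictDom 𝒜 '' PscSet 𝒜 𝒜L H π σ).Nonempty ∧
    IsCompact (restrictDom 𝒜 '' PscSet 𝒜 𝒜L H π σ) ∧
    ∀ F ∈ 𝒜,
      IsLeast {x | ∃ μ ∈ PscSet 𝒜 𝒜L H π σ, x = μ F}
        (lowerSInt H 𝒜L (fun i => σ F i) π) ∧
      IsGreatest {x | ∃ μ ∈ PscSet 𝒜 𝒜L H π σ, x = μ F}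
        (upperSInt H 𝒜L (fun i => σ F i) π) :=
  statement10_general H E 𝒜L 𝒜E 𝒜 hH h𝒜L h𝒜 π hπ σ hσ
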